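/- arXiv:2508.10910 — 4 statements merged into one kernel-verified Lean document; each statement's English description precedes it below -/
import Mathlib

section
/- For the tumour–immune ODE system there exists a bounded set Ω ⊂ ℝ⁷_{≥0} (a hyperparallelepiped) such that for every initial condition (S₀, P₀, TS₀, TP₀, DS₀, DP₀, NK₀) ∈ Ω with S₀ and P₀ not both zero, every solution of the corresponding Cauchy problem on [0, ∞) with non-negative components is bounded: each of the seven component functions S(t), P(t), TS(t), TP(t), DS(t), DP(t), NK(t) is bounded above uniformly in t ≥ 0. -/
open Set

lemma bound_aux (f f' : ℝ → ℝ) (hf : ∀ t, 0 ≤ t → HasDerivAt f (f' t) t)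
    (K : ℝ) (hK : ∀ t, 0 ≤ t → K ≤ f t → f' t ≤ 0) :
    ∀ t, 0 ≤ t → f t ≤ max (f 0) K := by
  intro t₁ ht₁
  by_contra hlt
  push_neg at hlt
  set M := max (f 0) K with hM
  have hf0 : f 0 ≤ M := le_max_left _ _
  have hKM : K ≤ M := le_max_right _ _
  have ht₁pos : 0 < t₁ := by
    rcases ht₁.lt_or_eq with h | h
    · exact h
    · exfalso; rw [← h] at hlt; exact absurd hf0 (not_le.2 hlt)
  have hcont : ContinuousOn f (Icc 0 t₁) := fun s hs =>
    ((hf s hs.1).continuousAt).continuousWithinAt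
  set A : Set ℝ := Icc 0 t₁ ∩ f ⁻¹' (Iic M) with hA
  have hA0 : (0:ℝ) ∈ A := ⟨⟨le_refl 0, ht₁⟩, hf0⟩
  have hAne : A.Nonempty := ⟨0, hA0⟩
  have hAbdd : BddAbove A := ⟨t₁, fun s hs => hs.1.2⟩
  have hAclosed : IsClosed A :=
    hcont.preimage_isClosed_of_isClosed isClosed_Icc isClosed_Iic
  set c := sSup A with hc
  have hcA : c ∈ A := hAclosed.csSup_mem hAne hAbdd
  have hc0 : 0 ≤ c := hcA.1.1
  have hct₁ : c ≤ t₁ := hcA.1.2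
  have hfc : f c ≤ M := hcA.2
  have hclt : c < t₁ := by
    rcases hct₁.lt_or_eq with h' | h'
    · exact h'
    · rw [h'] at hfc; exact absurd hfc (not_le.2 hlt)
  have hgt : ∀ s, c < s → s ≤ t₁ → M < f s := by
    intro s hcs hst
    by_contra hle
    push_neg at hle
    exact absurd (le_csSup hAbdd (⟨⟨hc0.trans hcs.le, hst⟩, hle⟩ : s ∈ A))
      (not_le.2 hcs)
  have hanti : AntitoneOn f (Icc c t₁) := by
    apply antitoneOn_of_deriv_nonpos (convex_Icc c t₁)
      (hcont.mono (Icc_subset_Icc hc0 le_rfl))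
    · intro s hs
      rw [interior_Icc] at hs
      exact ((hf s (hc0.trans hs.1.le)).differentiableAt).differentiableWithinAt
    · intro s hs
      rw [interior_Icc] at hs
      have hs0 : 0 ≤ s := hc0.trans hs.1.le
      rw [(hf s hs0).deriv]
      exact hK s hs0 (hKM.trans (hgt s hs.1 hs.2.le).le)
  have := hanti ⟨le_rfl, hclt.le⟩ ⟨hclt.le, le_rfl⟩ hclt.le
  exact absurd (this.trans hfc) (not_le.2 hlt)


set_option maxHeartbeats 1000000 in
/-- Boundedness of solutions of the tumour–immune ODE system: there exists a
bounded hyperparallelepiped `Ω ⊆ ℝ⁷₊` (given here by bounds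
`B_S, B_P, B_TS, B_TP, B_DS, B_DP, B_NK`) such that every solution on
`[0, ∞)` with non-negative components whose initial condition lies in `Ω`,
with `S 0` and `P 0` not both zero, has all seven components uniformly
bounded above. -/
theorem tumour_immune_boundedness
    (αs ρps ρsp δs βs μ l αp b αsp δp βp kts sts δts ktp stp δtp
      γds βds δds γdp βdp δdp σ f g h p : ℝ)
    (hαs : 0 < αs) (hρps : 0 < ρps) (hρsp : 0 < ρsp) (hδs : 0 < δs)
    (hβs : 0 < βs) (hμ : 0 < μ) (hl : 0 < l) (hαp : 0 < αp) (hb : 0 < b)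
    (hαsp : 0 < αsp) (hδp : 0 < δp) (hβp : 0 < βp) (hkts : 0 < kts)
    (hsts : 0 < sts) (hδts : 0 < δts) (hktp : 0 < ktp) (hstp : 0 < stp)
    (hδtp : 0 < δtp) (hγds : 0 < γds) (hβds : 0 < βds) (hδds : 0 < δds)
    (hγdp : 0 < γdp) (hβdp : 0 < βdp) (hδdp : 0 < δdp) (hσ : 0 < σ)
    (hf : 0 < f) (hg : 0 < g) (hh : 0 < h) (hp : 0 < p) :
    ∃ BS BP BTS BTP BDS BDP BNK : ℝ,
      0 < BS ∧ 0 < BP ∧ 0 < BTS ∧ 0 < BTP ∧ 0 < BDS ∧ 0 < BDP ∧ 0 < BNK ∧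
      ∀ S P TS TP DS DP NK : ℝ → ℝ,
        (0 ≤ S 0 ∧ S 0 ≤ BS) → (0 ≤ P 0 ∧ P 0 ≤ BP) →
        (0 ≤ TS 0 ∧ TS 0 ≤ BTS) → (0 ≤ TP 0 ∧ TP 0 ≤ BTP) →
        (0 ≤ DS 0 ∧ DS 0 ≤ BDS) → (0 ≤ DP 0 ∧ DP 0 ≤ BDP) →
        (0 ≤ NK 0 ∧ NK 0 ≤ BNK) →
        ¬(S 0 = 0 ∧ P 0 = 0) →
        (∀ t, 0 ≤ t → HasDerivAt S
          (αs * (S t / (S t + P t)) + ρps * P t - (ρsp + δs) * S t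
            - βs * TS t * (S t / (1 + (S t) ^ ((1:ℝ)/3) / l))
            - μ * NK t * (S t / (1 + (S t) ^ ((1:ℝ)/3) / l))) t) →
        (∀ t, 0 ≤ t → HasDerivAt P
          (αp * P t * (1 - b * P t) + (αsp + 2 * ρsp) * S t - (ρps + δp) * P t
            - βp * TP t * (P t / (1 + (P t) ^ ((1:ℝ)/3) / l))
            - μ * NK t * (P t / (1 + (P t) ^ ((1:ℝ)/3) / l))) t) →
        (∀ t, 0 ≤ t →
          HasDerivAt TS (kts * (DS t / (DS t + sts)) - δts * TS t) t) →
        (∀ t, 0 ≤ t →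
          HasDerivAt TP (ktp * (DP t / (DP t + stp)) - δtp * TP t) t) →
        (∀ t, 0 ≤ t →
          HasDerivAt DS (γds * S t - βds * DS t * TS t - δds * DS t) t) →
        (∀ t, 0 ≤ t →
          HasDerivAt DP (γdp * P t - βdp * DP t * TP t - δdp * DP t) t) →
        (∀ t, 0 ≤ t → HasDerivAt NK
          (σ - f * NK t + g * ((S t + P t) ^ 2 / ((S t + P t) ^ 2 + h))
            - p * NK t * ((S t + P t) / (1 + (S t + P t) ^ ((1:ℝ)/3) / l))) t) →
        (∀ t, 0 ≤ t → 0 ≤ S t ∧ 0 ≤ P t ∧ 0 ≤ TS t ∧ 0 ≤ TP t ∧ 0 ≤ DS t ∧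
          0 ≤ DP t ∧ 0 ≤ NK t) →
        ∃ C : ℝ, ∀ t, 0 ≤ t →
          S t ≤ C ∧ P t ≤ C ∧ TS t ≤ C ∧ TP t ≤ C ∧ DS t ≤ C ∧ DP t ≤ C ∧
            NK t ≤ C := by
  refine ⟨1, 1, 1, 1, 1, 1, 1, one_pos, one_pos, one_pos, one_pos, one_pos,
    one_pos, one_pos, ?_⟩
  intro S P TS TP DS DP NK hS0 hP0 hTS0 hTP0 hDS0 hDP0 hNK0 _hne
    hS hP hTS hTP hDS hDP hNK hpos
  have hd : (0:ℝ) < ρsp + δs := by linarith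
  obtain ⟨lam, hlam⟩ : ∃ lam : ℝ, lam = (αsp + 2*ρsp)/(ρsp+δs) + 1 := ⟨_, rfl⟩
  have hlam1 : (1:ℝ) ≤ lam := by
    have h0 : 0 ≤ (αsp + 2*ρsp)/(ρsp+δs) := div_nonneg (by linarith) hd.le
    rw [hlam]; linarith
  have hlam0 : (0:ℝ) ≤ lam := by linarith
  have hlamd : lam * (ρsp + δs) = (αsp + 2*ρsp) + (ρsp + δs) := by
    rw [hlam]; field_simp
  have hq : (0:ℝ) < αp*b := mul_pos hαp hb
  have hapos : (0:ℝ) < lam*αs := mul_pos (by linarith) hαs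
  have hccpos : (0:ℝ) < lam*ρps + αp := by
    have := mul_nonneg hlam0 hρps.le; linarith
  obtain ⟨KE, hKE⟩ : ∃ KE : ℝ, KE = lam * ((lam*αs + (lam*ρps+αp)^2/(4*(αp*b)))/(ρsp+δs))
      + ((lam*ρps+αp+1)/(αp*b) + lam*αs) := ⟨_, rfl⟩
  -- derivative inequality for V = lam*S + P
  have hVK : ∀ t, 0 ≤ t → KE ≤ lam * S t + P t →
      lam * (αs * (S t / (S t + P t)) + ρps * P t - (ρsp + δs) * S t
            - βs * TS t * (S t / (1 + (S t) ^ ((1:ℝ)/3) / l))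
            - μ * NK t * (S t / (1 + (S t) ^ ((1:ℝ)/3) / l)))
        + (αp * P t * (1 - b * P t) + (αsp + 2 * ρsp) * S t - (ρps + δp) * P t
            - βp * TP t * (P t / (1 + (P t) ^ ((1:ℝ)/3) / l))
            - μ * NK t * (P t / (1 + (P t) ^ ((1:ℝ)/3) / l))) ≤ 0 := by
    intro t ht hKV
    rw [hKE] at hKV
    obtain ⟨hSt, hPt, hTSt, hTPt, hDSt, hDPt, hNKt⟩ := hpos t ht
    have h3S : (0:ℝ) ≤ S t ^ ((1:ℝ)/3) := Real.rpow_nonneg hSt _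
    have h3P : (0:ℝ) ≤ P t ^ ((1:ℝ)/3) := Real.rpow_nonneg hPt _
    have hdenS : (0:ℝ) ≤ 1 + S t ^ ((1:ℝ)/3) / l := by
      have := div_nonneg h3S hl.le; linarith
    have hdenP : (0:ℝ) ≤ 1 + P t ^ ((1:ℝ)/3) / l := by
      have := div_nonneg h3P hl.le; linarith
    have h1 : αs * (S t / (S t + P t)) ≤ αs :=
      mul_le_of_le_one_right hαs.le
        (div_le_one_of_le₀ (le_add_of_nonneg_right hPt) (add_nonneg hSt hPt))
    have h2 : 0 ≤ βs * TS t * (S t / (1 + S t ^ ((1:ℝ)/3)/l)) :=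
      mul_nonneg (mul_nonneg hβs.le hTSt) (div_nonneg hSt hdenS)
    have h3 : 0 ≤ μ * NK t * (S t / (1 + S t ^ ((1:ℝ)/3)/l)) :=
      mul_nonneg (mul_nonneg hμ.le hNKt) (div_nonneg hSt hdenS)
    have h4 : 0 ≤ βp * TP t * (P t / (1 + P t ^ ((1:ℝ)/3)/l)) :=
      mul_nonneg (mul_nonneg hβp.le hTPt) (div_nonneg hPt hdenP)
    have h5 : 0 ≤ μ * NK t * (P t / (1 + P t ^ ((1:ℝ)/3)/l)) :=
      mul_nonneg (mul_nonneg hμ.le hNKt) (div_nonneg hPt hdenP)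
    have h6 : 0 ≤ (ρps + δp) * P t := mul_nonneg (by linarith) hPt
    have hSexpr : αs * (S t / (S t + P t)) + ρps * P t - (ρsp + δs) * S t
        - βs * TS t * (S t / (1 + (S t) ^ ((1:ℝ)/3) / l))
        - μ * NK t * (S t / (1 + (S t) ^ ((1:ℝ)/3) / l))
        ≤ αs + ρps * P t - (ρsp + δs) * S t := by linarith only [h1, h2, h3]
    have hSexpr' := mul_le_mul_of_nonneg_left hSexpr hlam0
    have hPexpr : αp * P t * (1 - b * P t) + (αsp + 2 * ρsp) * S t
        - (ρps + δp) * P t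
        - βp * TP t * (P t / (1 + (P t) ^ ((1:ℝ)/3) / l))
        - μ * NK t * (P t / (1 + (P t) ^ ((1:ℝ)/3) / l))
        ≤ αp * P t - (αp*b) * (P t * P t) + (αsp + 2*ρsp) * S t := by
      linarith only [h4, h5, h6]
    have hkey : lam * ((ρsp + δs) * S t)
        = (αsp + 2*ρsp) * S t + (ρsp + δs) * S t := by
      rw [← mul_assoc, hlamd]; ring
    have hgoal : lam*αs + (lam*ρps+αp) * P t - (αp*b)*(P t*P t)
        - (ρsp+δs)*S t ≤ 0 := by
      rcases le_or_gt ((lam*αs + (lam*ρps+αp)^2/(4*(αp*b)))/(ρsp+δs)) (S t)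
        with hc | hc
      · have h7 := mul_le_mul_of_nonneg_left hc hd.le
        have h8 : (ρsp+δs) * ((lam*αs + (lam*ρps+αp)^2/(4*(αp*b)))/(ρsp+δs))
            = lam*αs + (lam*ρps+αp)^2/(4*(αp*b)) := by
          rw [mul_comm]; exact div_mul_cancel₀ _ hd.ne'
        rw [h8] at h7
        have hX : (lam*ρps+αp)*P t - (αp*b)*(P t*P t)
            ≤ (lam*ρps+αp)^2/(4*(αp*b)) := by
          rw [le_div_iff₀ (by positivity : (0:ℝ) < 4*(αp*b))]
          linarith only [sq_nonneg ((lam*ρps+αp) - 2*(αp*b)*P t)]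
        linarith only [h7, hX]
      · have h7 := mul_le_mul_of_nonneg_left hc.le hlam0
        have hP2 : (lam*ρps+αp+1)/(αp*b) + lam*αs ≤ P t := by linarith only [hKV, h7]
        have h8 : (lam*ρps+αp+1)/(αp*b) * (αp*b) = lam*ρps+αp+1 :=
          div_mul_cancel₀ _ hq.ne'
        have hqa : lam*ρps+αp+1 + (αp*b)*(lam*αs) ≤ (αp*b)*P t := by
          have h9 := mul_le_mul_of_nonneg_left hP2 hq.le
          rw [mul_add] at h9
          linarith only [h9, h8]
        have hPa : lam*αs ≤ P t := by
          have h12 : 0 ≤ (lam*ρps+αp+1)/(αp*b) := div_nonneg (by positivity) hq.le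
          linarith only [h12, hP2]
        have hint : 0 ≤ P t * ((αp*b)*P t - (lam*ρps+αp) - 1 - (αp*b)*(lam*αs)) :=
          mul_nonneg hPt (by linarith only [hqa])
        have h10 : 0 ≤ (αp*b)*(lam*αs)*P t :=
          mul_nonneg (mul_nonneg hq.le hapos.le) hPt
        have h11 : 0 ≤ (ρsp+δs)*S t := mul_nonneg hd.le hSt
        linarith only [hint, hPa, h10, h11]
    linarith only [hSexpr', hPexpr, hkey, hgoal]
  have hVb : ∀ t, 0 ≤ t → lam * S t + P t ≤ max (lam * S 0 + P 0) KE :=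
    bound_aux (fun u => lam * S u + P u)
      (fun u => lam * (αs * (S u / (S u + P u)) + ρps * P u - (ρsp + δs) * S u
            - βs * TS u * (S u / (1 + (S u) ^ ((1:ℝ)/3) / l))
            - μ * NK u * (S u / (1 + (S u) ^ ((1:ℝ)/3) / l)))
        + (αp * P u * (1 - b * P u) + (αsp + 2 * ρsp) * S u - (ρps + δp) * P u
            - βp * TP u * (P u / (1 + (P u) ^ ((1:ℝ)/3) / l))
            - μ * NK u * (P u / (1 + (P u) ^ ((1:ℝ)/3) / l))))
      (fun t ht => ((hS t ht).const_mul lam).add (hP t ht)) KE hVK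
  obtain ⟨Mv, hMv⟩ : ∃ Mv : ℝ, Mv = max (lam + 1) KE := ⟨_, rfl⟩
  have hMvb : ∀ t, 0 ≤ t → lam * S t + P t ≤ Mv := by
    intro t ht
    rw [hMv]
    refine (hVb t ht).trans (max_le_max ?_ le_rfl)
    have h13 := mul_le_mul_of_nonneg_left hS0.2 hlam0
    linarith only [h13, hP0.2]
  have hMS : ∀ t, 0 ≤ t → S t ≤ Mv := by
    intro t ht
    have h1 := hMvb t ht
    have h2 := (hpos t ht).1
    have h3 := (hpos t ht).2.1
    have h4 := le_mul_of_one_le_left h2 hlam1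
    linarith only [h1, h3, h4]
  have hMP : ∀ t, 0 ≤ t → P t ≤ Mv := by
    intro t ht
    have h1 := hMvb t ht
    have h2 := (hpos t ht).1
    have h4 := mul_nonneg hlam0 h2
    linarith only [h1, h4]
  have hMv0 : (0:ℝ) ≤ Mv := by
    rw [hMv]; exact le_trans (by linarith) (le_max_left _ _)
  -- DS
  have hDSb : ∀ t, 0 ≤ t → DS t ≤ max (DS 0) (γds * Mv / δds) := by
    apply bound_aux DS (fun t => γds * S t - βds * DS t * TS t - δds * DS t) hDS
    intro t ht hge
    obtain ⟨hSt, hPt, hTSt, hTPt, hDSt, hDPt, hNKt⟩ := hpos t ht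
    have h1 : γds * S t ≤ γds * Mv := mul_le_mul_of_nonneg_left (hMS t ht) hγds.le
    have h2 : 0 ≤ βds * DS t * TS t := mul_nonneg (mul_nonneg hβds.le hDSt) hTSt
    have h3 := mul_le_mul_of_nonneg_left hge hδds.le
    have h4 : δds * (γds * Mv / δds) = γds * Mv := by field_simp
    linarith only [h1, h2, h3, h4]
  -- DP
  have hDPb : ∀ t, 0 ≤ t → DP t ≤ max (DP 0) (γdp * Mv / δdp) := by
    apply bound_aux DP (fun t => γdp * P t - βdp * DP t * TP t - δdp * DP t) hDP
    intro t ht hge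
    obtain ⟨hSt, hPt, hTSt, hTPt, hDSt, hDPt, hNKt⟩ := hpos t ht
    have h1 : γdp * P t ≤ γdp * Mv := mul_le_mul_of_nonneg_left (hMP t ht) hγdp.le
    have h2 : 0 ≤ βdp * DP t * TP t := mul_nonneg (mul_nonneg hβdp.le hDPt) hTPt
    have h3 := mul_le_mul_of_nonneg_left hge hδdp.le
    have h4 : δdp * (γdp * Mv / δdp) = γdp * Mv := by field_simp
    linarith only [h1, h2, h3, h4]
  -- TS
  have hTSb : ∀ t, 0 ≤ t → TS t ≤ max (TS 0) (kts / δts) := by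
    apply bound_aux TS (fun t => kts * (DS t / (DS t + sts)) - δts * TS t) hTS
    intro t ht hge
    obtain ⟨hSt, hPt, hTSt, hTPt, hDSt, hDPt, hNKt⟩ := hpos t ht
    have h1 : kts * (DS t / (DS t + sts)) ≤ kts :=
      mul_le_of_le_one_right hkts.le
        (div_le_one_of_le₀ (le_add_of_nonneg_right hsts.le)
          (add_nonneg hDSt hsts.le))
    have h3 := mul_le_mul_of_nonneg_left hge hδts.le
    have h4 : δts * (kts / δts) = kts := by field_simp
    linarith only [h1, h3, h4]
  -- TP
  have hTPb : ∀ t, 0 ≤ t → TP t ≤ max (TP 0) (ktp / δtp) := by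
    apply bound_aux TP (fun t => ktp * (DP t / (DP t + stp)) - δtp * TP t) hTP
    intro t ht hge
    obtain ⟨hSt, hPt, hTSt, hTPt, hDSt, hDPt, hNKt⟩ := hpos t ht
    have h1 : ktp * (DP t / (DP t + stp)) ≤ ktp :=
      mul_le_of_le_one_right hktp.le
        (div_le_one_of_le₀ (le_add_of_nonneg_right hstp.le)
          (add_nonneg hDPt hstp.le))
    have h3 := mul_le_mul_of_nonneg_left hge hδtp.le
    have h4 : δtp * (ktp / δtp) = ktp := by field_simp
    linarith only [h1, h3, h4]
  -- NK
  have hNKb : ∀ t, 0 ≤ t → NK t ≤ max (NK 0) ((σ + g) / f) := by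
    apply bound_aux NK (fun t => σ - f * NK t
      + g * ((S t + P t) ^ 2 / ((S t + P t) ^ 2 + h))
      - p * NK t * ((S t + P t) / (1 + (S t + P t) ^ ((1:ℝ)/3) / l))) hNK
    intro t ht hge
    obtain ⟨hSt, hPt, hTSt, hTPt, hDSt, hDPt, hNKt⟩ := hpos t ht
    have hx : (0:ℝ) ≤ S t + P t := add_nonneg hSt hPt
    have h3x : (0:ℝ) ≤ (S t + P t) ^ ((1:ℝ)/3) := Real.rpow_nonneg hx _
    have hden : (0:ℝ) ≤ 1 + (S t + P t) ^ ((1:ℝ)/3) / l := by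
      have := div_nonneg h3x hl.le; linarith
    have h1 : g * ((S t + P t) ^ 2 / ((S t + P t) ^ 2 + h)) ≤ g :=
      mul_le_of_le_one_right hg.le
        (div_le_one_of_le₀ (le_add_of_nonneg_right hh.le)
          (add_nonneg (sq_nonneg _) hh.le))
    have h2 : 0 ≤ p * NK t * ((S t + P t) / (1 + (S t + P t) ^ ((1:ℝ)/3) / l)) :=
      mul_nonneg (mul_nonneg hp.le hNKt) (div_nonneg hx hden)
    have h3 := mul_le_mul_of_nonneg_left hge hf.le
    have h4 : f * ((σ + g) / f) = σ + g := by field_simp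
    linarith only [h1, h2, h3, h4]
  -- assemble
  refine ⟨Mv + max 1 (kts/δts) + max 1 (ktp/δtp) + max 1 (γds*Mv/δds)
    + max 1 (γdp*Mv/δdp) + max 1 ((σ+g)/f), fun t ht => ?_⟩
  have m1 : (1:ℝ) ≤ max 1 (kts/δts) := le_max_left _ _
  have m2 : (1:ℝ) ≤ max 1 (ktp/δtp) := le_max_left _ _
  have m3 : (1:ℝ) ≤ max 1 (γds*Mv/δds) := le_max_left _ _
  have m4 : (1:ℝ) ≤ max 1 (γdp*Mv/δdp) := le_max_left _ _
  have m5 : (1:ℝ) ≤ max 1 ((σ+g)/f) := le_max_left _ _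
  have bTS : TS t ≤ max 1 (kts/δts) :=
    (hTSb t ht).trans (max_le_max hTS0.2 le_rfl)
  have bTP : TP t ≤ max 1 (ktp/δtp) :=
    (hTPb t ht).trans (max_le_max hTP0.2 le_rfl)
  have bDS : DS t ≤ max 1 (γds*Mv/δds) :=
    (hDSb t ht).trans (max_le_max hDS0.2 le_rfl)
  have bDP : DP t ≤ max 1 (γdp*Mv/δdp) :=
    (hDPb t ht).trans (max_le_max hDP0.2 le_rfl)
  have bNK : NK t ≤ max 1 ((σ+g)/f) :=
    (hNKb t ht).trans (max_le_max hNK0.2 le_rfl)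
  have bS := hMS t ht
  have bP := hMP t ht
  exact ⟨by linarith only [bS, m1, m2, m3, m4, m5],
    by linarith only [bP, m1, m2, m3, m4, m5],
    by linarith only [bTS, hMv0, m2, m3, m4, m5],
    by linarith only [bTP, hMv0, m1, m3, m4, m5],
    by linarith only [bDS, hMv0, m1, m2, m4, m5],
    by linarith only [bDP, hMv0, m1, m2, m3, m5],
    by linarith only [bNK, hMv0, m1, m2, m3, m4]⟩
end

section
/- Let σ, f, g, h, p, l > 0 and let S, P : [0, ∞) → ℝ be continuous with S(t) ≥ 0 and P(t) ≥ 0 for all t ≥ 0. If NK : [0, ∞) → ℝ is differentiable, satisfies NK'(t) = σ − f·NK(t) + g·(S(t)+P(t))²/((S(t)+P(t))²+h) − p·NK(t)·(S(t)+P(t))/(1+(S(t)+P(t))^{1/3}/l) for all t ≥ 0, NK(t) ≥ 0 for all t ≥ 0, and NK(0) > 0, then NK(t) < (σ+g)/f + NK(0)·exp(−f·t) for all t ≥ 0; in particular NK is uniformly bounded above by (σ+g)/f + NK(0). -/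
/-- Boundedness of the natural-killer population `NK`:
if `NK' = σ − f·NK + g·(S+P)²/((S+P)²+h) − p·NK·(S+P)/(1+(S+P)^{1/3}/l)` on
`[0,∞)`, with `S, P ≥ 0` continuous, `NK ≥ 0`, all parameters positive and
`NK 0 > 0`, then `NK t < (σ+g)/f + NK 0 · exp(−f t)` for all `t ≥ 0`; in
particular `NK` is uniformly bounded above by `(σ+g)/f + NK 0`. -/
theorem nk_bounded
    (σ f g h p l : ℝ)
    (hσ : 0 < σ) (hf : 0 < f) (hg : 0 < g) (hh : 0 < h) (hp : 0 < p) (hl : 0 < l)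
    (S P : ℝ → ℝ)
    (hScont : ContinuousOn S (Set.Ici 0)) (hPcont : ContinuousOn P (Set.Ici 0))
    (hSnonneg : ∀ t, 0 ≤ t → 0 ≤ S t) (hPnonneg : ∀ t, 0 ≤ t → 0 ≤ P t)
    (NK : ℝ → ℝ)
    (hNK : ∀ t, 0 ≤ t → HasDerivAt NK
      (σ - f * NK t + g * (S t + P t) ^ 2 / ((S t + P t) ^ 2 + h)
        - p * NK t * ((S t + P t) / (1 + (S t + P t) ^ ((1:ℝ)/3) / l))) t)
    (hNKnonneg : ∀ t, 0 ≤ t → 0 ≤ NK t)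
    (hNK0 : 0 < NK 0) :
    (∀ t, 0 ≤ t → NK t < (σ + g) / f + NK 0 * Real.exp (-f * t)) ∧
      ∀ t, 0 ≤ t → NK t ≤ (σ + g) / f + NK 0 := by
  set c : ℝ := (σ + g) / f with hc
  have hcpos : 0 < c := div_pos (by linarith) hf
  have hfc : f * c = σ + g := by
    rw [hc]; field_simp
  set φ : ℝ → ℝ := fun t => (NK t - c) * Real.exp (f * t) with hφ
  have hφderiv : ∀ t, 0 ≤ t → HasDerivAt φ
      (((σ - f * NK t + g * (S t + P t) ^ 2 / ((S t + P t) ^ 2 + h)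
        - p * NK t * ((S t + P t) / (1 + (S t + P t) ^ ((1:ℝ)/3) / l)))
        + f * (NK t - c)) * Real.exp (f * t)) t := by
    intro t ht
    have h1 := (hNK t ht).sub_const c
    have h2 : HasDerivAt (fun t => Real.exp (f * t)) (f * Real.exp (f * t)) t := by
      simpa [mul_comm, Function.comp_def] using (Real.hasDerivAt_exp (f * t)).comp t
        ((hasDerivAt_id t).const_mul f)
    have := h1.mul h2
    refine this.congr_deriv ?_
    ring
  have hderiv_nonpos : ∀ t, 0 ≤ t → deriv φ t ≤ 0 := by
    intro t ht
    rw [(hφderiv t ht).deriv]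
    have hq : 0 ≤ S t + P t := add_nonneg (hSnonneg t ht) (hPnonneg t ht)
    have hden : (0:ℝ) < (S t + P t) ^ 2 + h := by positivity
    have hA : g * (S t + P t) ^ 2 / ((S t + P t) ^ 2 + h) ≤ g := by
      rw [div_le_iff₀ hden]
      nlinarith [sq_nonneg (S t + P t)]
    have hrpow : 0 ≤ (S t + P t) ^ ((1:ℝ)/3) := Real.rpow_nonneg hq _
    have hden2 : (0:ℝ) < 1 + (S t + P t) ^ ((1:ℝ)/3) / l := by positivity
    have hB : 0 ≤ p * NK t * ((S t + P t) / (1 + (S t + P t) ^ ((1:ℝ)/3) / l)) := by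
      have := hNKnonneg t ht
      positivity
    have hE : 0 < Real.exp (f * t) := Real.exp_pos _
    have hbr : (σ - f * NK t + g * (S t + P t) ^ 2 / ((S t + P t) ^ 2 + h)
        - p * NK t * ((S t + P t) / (1 + (S t + P t) ^ ((1:ℝ)/3) / l)))
        + f * (NK t - c) ≤ 0 := by nlinarith
    exact mul_nonpos_of_nonpos_of_nonneg hbr hE.le
  have hcont : ContinuousOn φ (Set.Ici 0) := fun t ht =>
    ((hφderiv t ht).differentiableAt).continuousAt.continuousWithinAt
  have hanti : AntitoneOn φ (Set.Ici 0) := by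
    apply antitoneOn_of_deriv_nonpos (convex_Ici 0) hcont
    · intro x hx
      rw [interior_Ici] at hx
      exact ((hφderiv x (le_of_lt hx)).differentiableAt).differentiableWithinAt
    · intro x hx
      rw [interior_Ici] at hx
      exact hderiv_nonpos x (le_of_lt hx)
  have main : ∀ t, 0 ≤ t → NK t < c + NK 0 * Real.exp (-f * t) := by
    intro t ht
    have hφt : φ t ≤ φ 0 := hanti Set.self_mem_Ici ht ht
    have hE : 0 < Real.exp (f * t) := Real.exp_pos _
    have hφ0 : φ 0 = NK 0 - c := by simp [hφ]
    have h1 : (NK t - c) * Real.exp (f * t) ≤ NK 0 - c := by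
      rw [← hφ0]; exact hφt
    have hinv : Real.exp (-f * t) = (Real.exp (f * t))⁻¹ := by
      rw [← Real.exp_neg]; ring_nf
    rw [hinv, ← mul_lt_mul_iff_left₀ hE]
    have heq : (c + NK 0 * (Real.exp (f * t))⁻¹) * Real.exp (f * t)
        = c * Real.exp (f * t) + NK 0 := by field_simp
    rw [heq]
    nlinarith [mul_pos hcpos hE]
  refine ⟨main, fun t ht => ?_⟩
  have h1 := main t ht
  have h2 : Real.exp (-f * t) ≤ 1 := Real.exp_le_one_iff.mpr (by nlinarith)
  nlinarith
end

section
/- Let γ, β, δ > 0, let S†> 0, let S : [0, ∞) → ℝ be continuous with 0 ≤ S(t) ≤ S† for all t ≥ 0, and let TS : [0, ∞) → ℝ be continuous with TS(t) ≥ 0 for all t ≥ 0. If DS : [0, ∞) → ℝ is differentiable, satisfies DS'(t) = γ·S(t) − β·DS(t)·TS(t) − δ·DS(t) for all t ≥ 0, DS(t) ≥ 0 for all t ≥ 0, and DS(0) > 0, then DS(t) < γ·S†/δ + DS(0)·exp(−δ·t) for all t ≥ 0; in particular DS is uniformly bounded above by γ·S†/δ + DS(0). -/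
/-- Boundedness of the dendritic-cell population `DS`:
if `DS' = γ·S − β·DS·TS − δ·DS` on `[0,∞)` with `0 ≤ S ≤ S†`, `TS ≥ 0`,
`DS ≥ 0` and `DS 0 > 0`, then `DS t < γ·S†/δ + DS 0 · exp(−δ t)` for all
`t ≥ 0`; in particular `DS` is uniformly bounded above by `γ·S†/δ + DS 0`. -/
theorem ds_bounded
    (γ β δ Sdag : ℝ) (hγ : 0 < γ) (hβ : 0 < β) (hδ : 0 < δ) (hSdag : 0 < Sdag)
    (S : ℝ → ℝ) (hScont : ContinuousOn S (Set.Ici 0))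
    (hS : ∀ t, 0 ≤ t → 0 ≤ S t ∧ S t ≤ Sdag)
    (TS : ℝ → ℝ) (hTScont : ContinuousOn TS (Set.Ici 0))
    (hTSnonneg : ∀ t, 0 ≤ t → 0 ≤ TS t)
    (DS : ℝ → ℝ)
    (hDS : ∀ t, 0 ≤ t → HasDerivAt DS (γ * S t - β * DS t * TS t - δ * DS t) t)
    (hDSnonneg : ∀ t, 0 ≤ t → 0 ≤ DS t)
    (hDS0 : 0 < DS 0) :
    (∀ t, 0 ≤ t → DS t < γ * Sdag / δ + DS 0 * Real.exp (-δ * t)) ∧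
      ∀ t, 0 ≤ t → DS t ≤ γ * Sdag / δ + DS 0 := by
  set c : ℝ := γ * Sdag / δ with hc
  have hcpos : 0 < c := div_pos (mul_pos hγ hSdag) hδ
  set h : ℝ → ℝ := fun t => (DS t - c) * Real.exp (δ * t) with hh
  have hderiv : ∀ t, 0 ≤ t →
      HasDerivAt h ((γ * S t - γ * Sdag - β * DS t * TS t) * Real.exp (δ * t)) t := by
    intro t ht
    have he : HasDerivAt (fun t => Real.exp (δ * t)) (δ * Real.exp (δ * t)) t := by
      simpa [mul_comm] using
        ((hasDerivAt_id t).const_mul δ).exp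
    have := ((hDS t ht).sub_const c).mul he
    refine this.congr_deriv ?_
    unfold c
    field_simp
    ring
  have hmono : AntitoneOn h (Set.Ici (0:ℝ)) := by
    apply antitoneOn_of_deriv_nonpos (convex_Ici 0)
    · intro x hx
      exact (hderiv x hx).continuousAt.continuousWithinAt
    · intro x hx
      rw [interior_Ici] at hx
      exact ((hderiv x hx.le).differentiableAt).differentiableWithinAt
    · intro x hx
      rw [interior_Ici] at hx
      have hx' : (0:ℝ) ≤ x := le_of_lt hx
      rw [(hderiv x hx').deriv]
      have h1 : γ * S x - γ * Sdag ≤ 0 := by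
        have := (hS x hx').2
        nlinarith
      have h2 : 0 ≤ β * DS x * TS x :=
        mul_nonneg (mul_nonneg hβ.le (hDSnonneg x hx')) (hTSnonneg x hx')
      have : γ * S x - γ * Sdag - β * DS x * TS x ≤ 0 := by linarith
      exact mul_nonpos_of_nonpos_of_nonneg this (Real.exp_pos _).le
  have key : ∀ t, 0 ≤ t → DS t < c + DS 0 * Real.exp (-δ * t) := by
    intro t ht
    have hle : h t ≤ h 0 := hmono Set.self_mem_Ici ht ht
    have hexp : Real.exp (δ * t) > 0 := Real.exp_pos _
    have h0 : h 0 = DS 0 - c := by simp [hh]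
    have : (DS t - c) * Real.exp (δ * t) ≤ DS 0 - c := by rw [← h0]; exact hle
    have hlt : (DS t - c) * Real.exp (δ * t) < DS 0 := by linarith
    have h3 : DS t - c < DS 0 / Real.exp (δ * t) := (lt_div_iff₀ hexp).mpr hlt
    have hrw : DS 0 * Real.exp (-δ * t) = DS 0 / Real.exp (δ * t) := by
      rw [neg_mul, Real.exp_neg, div_eq_mul_inv]
    linarith
  refine ⟨key, fun t ht => ?_⟩
  have := key t ht
  have hle1 : Real.exp (-δ * t) ≤ 1 := by
    apply Real.exp_le_one_iff.mpr
    nlinarith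
  nlinarith [Real.exp_pos (-δ * t)]
end

section
/- Let α_p, b, α_sp, ρ_sp, ρ_ps, δ_p > 0 and S† > 0. Let S, TP, NK : [0, ∞) → ℝ be continuous with 0 ≤ S(t) ≤ S†, TP(t) ≥ 0 and NK(t) ≥ 0 for all t ≥ 0, and let β_p, μ, l > 0. If P : [0, ∞) → ℝ is differentiable, satisfies P'(t) = α_p·P(t)·(1−b·P(t)) + (α_sp+2ρ_sp)·S(t) − (ρ_ps+δ_p)·P(t) − (β_p·TP(t) + μ·NK(t))·P(t)/(1+P(t)^{1/3}/l) for all t ≥ 0, P(t) ≥ 0 for all t ≥ 0, and P(0) > 0, then P(t) ≤ (α_p + 4b·(α_sp+2ρ_sp)·S†)/(4b·(ρ_ps+δ_p)) + P(0)·exp(−(ρ_ps+δ_p)·t) for all t ≥ 0; in particular P is uniformly bounded above. -/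
/-- Boundedness of the differentiated-cancer-cell population `P`:
if `P' = α_p·P·(1−b·P) + (α_sp+2ρ_sp)·S − (ρ_ps+δ_p)·P
        − (β_p·TP + μ·NK)·P/(1+P^{1/3}/l)` on `[0,∞)`, with `0 ≤ S ≤ S†`,
`TP, NK ≥ 0`, `P ≥ 0`, all parameters positive and `P 0 > 0`, then
`P t ≤ (α_p + 4b(α_sp+2ρ_sp)S†)/(4b(ρ_ps+δ_p)) + P 0 · exp(−(ρ_ps+δ_p)t)`
for all `t ≥ 0`; in particular `P` is uniformly bounded above. -/
theorem p_bounded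
    (αp b αsp ρsp ρps δp βp μ l Sdag : ℝ)
    (hαp : 0 < αp) (hb : 0 < b) (hαsp : 0 < αsp) (hρsp : 0 < ρsp)
    (hρps : 0 < ρps) (hδp : 0 < δp) (hβp : 0 < βp) (hμ : 0 < μ) (hl : 0 < l)
    (hSdag : 0 < Sdag)
    (S TP NK : ℝ → ℝ)
    (hScont : ContinuousOn S (Set.Ici 0))
    (hTPcont : ContinuousOn TP (Set.Ici 0))
    (hNKcont : ContinuousOn NK (Set.Ici 0))
    (hS : ∀ t, 0 ≤ t → 0 ≤ S t ∧ S t ≤ Sdag)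
    (hTP : ∀ t, 0 ≤ t → 0 ≤ TP t)
    (hNK : ∀ t, 0 ≤ t → 0 ≤ NK t)
    (P : ℝ → ℝ)
    (hP : ∀ t, 0 ≤ t → HasDerivAt P
      (αp * P t * (1 - b * P t) + (αsp + 2 * ρsp) * S t - (ρps + δp) * P t
        - (βp * TP t + μ * NK t) * (P t / (1 + (P t) ^ ((1:ℝ)/3) / l))) t)
    (hPnonneg : ∀ t, 0 ≤ t → 0 ≤ P t)
    (hP0 : 0 < P 0) :
    (∀ t, 0 ≤ t → P t ≤ (αp + 4 * b * (αsp + 2 * ρsp) * Sdag) / (4 * b * (ρps + δp))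
        + P 0 * Real.exp (-(ρps + δp) * t)) ∧
      ∃ C : ℝ, ∀ t, 0 ≤ t → P t ≤ C := by
  set k : ℝ := ρps + δp with hkdef
  have hk : 0 < k := by positivity
  set M : ℝ := αp / (4 * b) + (αsp + 2 * ρsp) * Sdag with hMdef
  have hMpos : 0 < M := by positivity
  set c : ℝ := M / k with hcdef
  have hcpos : 0 < c := by positivity
  set g : ℝ → ℝ := fun t => (P t - c) * Real.exp (k * t) with hgdef
  -- derivative of g and its nonpositivity on [0,∞)
  have hgderiv : ∀ t, 0 ≤ t → HasDerivAt g
      ((αp * P t * (1 - b * P t) + (αsp + 2 * ρsp) * S t - k * P t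
        - (βp * TP t + μ * NK t) * (P t / (1 + (P t) ^ ((1:ℝ)/3) / l))) * Real.exp (k * t)
        + (P t - c) * (Real.exp (k * t) * k)) t := by
    intro t ht
    have hexp : HasDerivAt (fun t => Real.exp (k * t)) (Real.exp (k * t) * k) t := by
      have : HasDerivAt (fun t => k * t) k t := by
        simpa using (hasDerivAt_id t).const_mul k
      simpa using this.exp
    exact ((hP t ht).sub_const c).mul hexp
  have hderiv_nonpos : ∀ t, 0 ≤ t →
      (αp * P t * (1 - b * P t) + (αsp + 2 * ρsp) * S t - k * P t
        - (βp * TP t + μ * NK t) * (P t / (1 + (P t) ^ ((1:ℝ)/3) / l))) * Real.exp (k * t)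
        + (P t - c) * (Real.exp (k * t) * k) ≤ 0 := by
    intro t ht
    have hPt := hPnonneg t ht
    have hr : (0:ℝ) ≤ (P t) ^ ((1:ℝ)/3) := Real.rpow_nonneg hPt _
    have hden : (0:ℝ) < 1 + (P t) ^ ((1:ℝ)/3) / l := by positivity
    have hkill : 0 ≤ (βp * TP t + μ * NK t) * (P t / (1 + (P t) ^ ((1:ℝ)/3) / l)) := by
      have h1 : 0 ≤ βp * TP t + μ * NK t := by
        have := hTP t ht; have := hNK t ht; positivity
      exact mul_nonneg h1 (div_nonneg hPt hden.le)
    have hlog : αp * P t * (1 - b * P t) ≤ αp / (4 * b) := by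
      rw [le_div_iff₀ (by positivity : (0:ℝ) < 4 * b)]
      nlinarith [mul_nonneg hαp.le (sq_nonneg (2 * b * P t - 1))]
    have hSle := (hS t ht).2
    have hsum : αp * P t * (1 - b * P t) + (αsp + 2 * ρsp) * S t - k * P t
        - (βp * TP t + μ * NK t) * (P t / (1 + (P t) ^ ((1:ℝ)/3) / l))
        + (P t - c) * k ≤ 0 := by
      have hck : c * k = M := by rw [hcdef]; exact div_mul_cancel₀ M hk.ne'
      have hA : (αsp + 2 * ρsp) * S t ≤ (αsp + 2 * ρsp) * Sdag := by
        have : 0 < αsp + 2 * ρsp := by positivity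
        exact mul_le_mul_of_nonneg_left hSle this.le
      have hexpand : αp * P t * (1 - b * P t) + (αsp + 2 * ρsp) * S t - k * P t
          - (βp * TP t + μ * NK t) * (P t / (1 + (P t) ^ ((1:ℝ)/3) / l))
          + (P t - c) * k
          = αp * P t * (1 - b * P t) + (αsp + 2 * ρsp) * S t
          - (βp * TP t + μ * NK t) * (P t / (1 + (P t) ^ ((1:ℝ)/3) / l)) - c * k := by ring
      rw [hexpand, hck, hMdef]
      linarith [hkill, hlog, hA]
    have hexp : 0 < Real.exp (k * t) := Real.exp_pos _
    calc (αp * P t * (1 - b * P t) + (αsp + 2 * ρsp) * S t - k * P t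
        - (βp * TP t + μ * NK t) * (P t / (1 + (P t) ^ ((1:ℝ)/3) / l))) * Real.exp (k * t)
        + (P t - c) * (Real.exp (k * t) * k)
        = (αp * P t * (1 - b * P t) + (αsp + 2 * ρsp) * S t - k * P t
        - (βp * TP t + μ * NK t) * (P t / (1 + (P t) ^ ((1:ℝ)/3) / l))
        + (P t - c) * k) * Real.exp (k * t) := by ring
      _ ≤ 0 * Real.exp (k * t) := by
          exact mul_le_mul_of_nonneg_right hsum hexp.le
      _ = 0 := by ring
  have hanti : AntitoneOn g (Set.Ici (0:ℝ)) := by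
    apply antitoneOn_of_deriv_nonpos (convex_Ici 0)
    · intro t ht
      exact (hgderiv t ht).continuousAt.continuousWithinAt
    · intro t ht
      rw [interior_Ici] at ht
      exact (hgderiv t (le_of_lt ht)).differentiableAt.differentiableWithinAt
    · intro t ht
      rw [interior_Ici] at ht
      rw [(hgderiv t ht.le).deriv]
      exact hderiv_nonpos t ht.le
  have hmain : ∀ t, 0 ≤ t → P t ≤ c + P 0 * Real.exp (-k * t) := by
    intro t ht
    have h1 : g t ≤ g 0 := hanti Set.self_mem_Ici ht ht
    simp only [hgdef, mul_zero, Real.exp_zero, mul_one] at h1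
    have hexp : 0 < Real.exp (k * t) := Real.exp_pos _
    have h2 : P t - c ≤ (P 0 - c) / Real.exp (k * t) := by
      rw [le_div_iff₀ hexp]; exact h1
    have h3 : (P 0 - c) / Real.exp (k * t) ≤ P 0 * Real.exp (-k * t) := by
      have he : Real.exp (-k * t) = (Real.exp (k * t))⁻¹ := by
        rw [show -k * t = -(k * t) by ring, Real.exp_neg]
      rw [he, div_eq_mul_inv]
      exact mul_le_mul_of_nonneg_right (by linarith) (by positivity)
    linarith
  have hceq : c = (αp + 4 * b * (αsp + 2 * ρsp) * Sdag) / (4 * b * (ρps + δp)) := by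
    rw [hcdef, hMdef, hkdef]
    field_simp
  constructor
  · intro t ht
    rw [← hceq]
    exact hmain t ht
  · refine ⟨c + P 0, fun t ht => ?_⟩
    have := hmain t ht
    have hle1 : Real.exp (-k * t) ≤ 1 := by
      apply Real.exp_le_one_iff.mpr
      nlinarith
    nlinarith [hP0.le]
end
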